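/- Let φ̂_k(x) = T_k(x) − T_{k+2}(x) and φ̃_k(x) = T_k(x) − (2(k+2)/(k+3)) T_{k+2}(x) + ((k+1)/(k+3)) T_{k+4}(x). For all j, k ∈ ℕ the first-derivative matrix entries C̃_{kj} = ⟨φ̂_j', φ̃_k⟩_σ satisfy: C̃_{kj} = −π(k+1) if j = k−1; C̃_{k,k+1} = 2π(k+1); C̃_{k,k+3} = −π(k+1); and C̃_{kj} = 0 otherwise. -/

import Mathlib

open Real Polynomial

/-- The k-th Chebyshev polynomial of the first kind, as a real polynomial. -/
noncomputable def chebT (n : ℕ) : Polynomial ℝ := Polynomial.Chebyshev.T ℝ (n : ℤ)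

/-- The Chebyshev-weighted inner product `⟨f,g⟩_σ = ∫_{-1}^{1} f g (1-x²)^{-1/2} dx`. -/
noncomputable def chebInner (f g : Polynomial ℝ) : ℝ :=
  ∫ x in (-1:ℝ)..1, f.eval x * g.eval x / Real.sqrt (1 - x ^ 2)

/-- Shen's Dirichlet basis function `φ̂_k = T_k − T_{k+2}`. -/
noncomputable def shenD (k : ℕ) : Polynomial ℝ := chebT k - chebT (k + 2)

/-- Shen's biharmonic basis function
`φ̃_k = T_k − (2(k+2)/(k+3)) T_{k+2} + ((k+1)/(k+3)) T_{k+4}`. -/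
noncomputable def shenB (k : ℕ) : Polynomial ℝ :=
  chebT k - Polynomial.C ((2 * ((k : ℝ) + 2)) / ((k : ℝ) + 3)) * chebT (k + 2)
    + Polynomial.C (((k : ℝ) + 1) / ((k : ℝ) + 3)) * chebT (k + 4)

/-!
Substituting `x = cos θ` turns `⟨·,·⟩_σ` into an integral over `[0, π]`. There
`T_n'(cos θ) sin θ = n sin nθ`, so `φ̂_j'(cos θ) sin θ = j sin jθ - (j+2) sin (j+2)θ`, while
`(k+3) φ̃_k(cos θ) = 2 sin θ ((k+3) sin (k+1)θ - (k+1) sin (k+3)θ)`. The factors `sin θ` cancel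
and the entry is read off from the orthogonality of the `sin nθ` on `[0, π]`.
-/

open intervalIntegral

lemma chebInner_eq_integral_cos (f g : ℝ[X]) :
    chebInner f g = ∫ θ in 0..π, f.eval (cos θ) * g.eval (cos θ) := by
  rw [chebInner, ← Chebyshev.integral_measureT_eq_integral_cos (f := fun x ↦ f.eval x * g.eval x),
    Chebyshev.integral_measureT]
  simp_rw [div_eq_mul_inv, Real.sqrt_inv]

lemma integral_cos_int_mul (m : ℤ) :
    ∫ θ in 0..π, cos (m * θ) = if m = 0 then π else 0 := by
  split_ifs with hm
  · simp [hm]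
  · rw [integral_comp_mul_left cos (Int.cast_ne_zero.2 hm)]
    simp [sin_int_mul_pi]

lemma integral_sin_nat_mul_mul_sin_nat_mul (m n : ℕ) (hn : n ≠ 0) :
    ∫ θ in 0..π, sin (m * θ) * sin (n * θ) = if m = n then π / 2 else 0 := by
  have product_to_sum (θ : ℝ) : sin (m * θ) * sin (n * θ) =
      (cos (((m - n : ℤ) : ℝ) * θ) - cos (((m + n : ℤ) : ℝ) * θ)) / 2 := by
    push_cast
    rw [sub_mul, add_mul, cos_sub, cos_add]
    ring
  simp_rw [product_to_sum]
  rw [integral_div, integral_sub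
    ((by fun_prop : Continuous _).intervalIntegrable _ _)
    ((by fun_prop : Continuous _).intervalIntegrable _ _), integral_cos_int_mul,
    integral_cos_int_mul]
  split_ifs <;> first | omega | simp

lemma derivative_shenD_eval_cos_mul_sin (j : ℕ) (θ : ℝ) :
    (derivative (shenD j)).eval (cos θ) * sin θ =
      j * sin (j * θ) - (j + 2) * sin ((j + 2) * θ) := by
  have hU₁ := Chebyshev.U_real_cos θ ((j : ℤ) - 1)
  have hU₂ := Chebyshev.U_real_cos θ ((j : ℤ) + 1)
  simp only [shenD, chebT, derivative_sub, Chebyshev.T_derivative_eq_U, eval_sub, eval_mul,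
    eval_intCast]
  push_cast at hU₁ hU₂ ⊢
  rw [show (j : ℤ) + 2 - 1 = j + 1 by ring, sub_mul, mul_assoc, mul_assoc, hU₁, hU₂]
  ring_nf

lemma shenB_eval_cos (k : ℕ) (θ : ℝ) :
    (k + 3) * (shenB k).eval (cos θ) =
      2 * sin θ * ((k + 3) * sin ((k + 1) * θ) - (k + 1) * sin ((k + 3) * θ)) := by
  have hk : (k : ℝ) + 3 ≠ 0 := by positivity
  simp only [shenB, chebT, eval_add, eval_sub, eval_mul, eval_C, Chebyshev.T_real_cos]
  push_cast
  rw [show (k : ℝ) * θ = (k + 2) * θ - 2 * θ by ring,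
    show ((k : ℝ) + 4) * θ = (k + 2) * θ + 2 * θ by ring,
    show ((k : ℝ) + 1) * θ = (k + 2) * θ - θ by ring,
    show ((k : ℝ) + 3) * θ = (k + 2) * θ + θ by ring,
    cos_sub, cos_add, sin_sub, sin_add, cos_two_mul, sin_two_mul]
  field_simp
  linear_combination (4 * (k : ℝ) + 8) * cos ((k + 2) * θ) * sin_sq_add_cos_sq θ

lemma integral_sin_sub_sin_mul_sin_sub_sin (a b c d : ℝ) (m m' n n' : ℕ) (hn : n ≠ 0)
    (hn' : n' ≠ 0) :
    ∫ θ in 0..π, (a * sin (m * θ) - b * sin (m' * θ)) * (c * sin (n * θ) - d * sin (n' * θ)) =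
      π / 2 * ((if m = n then a * c else 0) - (if m = n' then a * d else 0)
        - (if m' = n then b * c else 0) + (if m' = n' then b * d else 0)) := by
  have hI (x : ℝ) (p q : ℕ) :
      IntervalIntegrable (fun θ ↦ x * (sin (p * θ) * sin (q * θ))) MeasureTheory.volume 0 π :=
    (by fun_prop : Continuous _).intervalIntegrable _ _
  have expand (θ : ℝ) :
      (a * sin (m * θ) - b * sin (m' * θ)) * (c * sin (n * θ) - d * sin (n' * θ)) =
      a * c * (sin (m * θ) * sin (n * θ)) - a * d * (sin (m * θ) * sin (n' * θ))
        - b * c * (sin (m' * θ) * sin (n * θ)) + b * d * (sin (m' * θ) * sin (n' * θ)) := by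
    ring
  simp_rw [expand]
  rw [integral_add (((hI _ _ _).sub (hI _ _ _)).sub (hI _ _ _)) (hI _ _ _),
    integral_sub ((hI _ _ _).sub (hI _ _ _)) (hI _ _ _), integral_sub (hI _ _ _) (hI _ _ _)]
  simp only [integral_const_mul, integral_sin_nat_mul_mul_sin_nat_mul _ _ hn,
    integral_sin_nat_mul_mul_sin_nat_mul _ _ hn']
  split_ifs <;> ring

lemma mul_chebInner_derivative_shenD_shenB (j k : ℕ) :
    (k + 3) * chebInner (derivative (shenD j)) (shenB k) =
      π * ((if j = k + 1 then (j * (k + 3) + (j + 2) * (k + 1) : ℝ) else 0)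
        - (if j = k + 3 then (j * (k + 1) : ℝ) else 0)
        - (if j + 1 = k then ((j + 2) * (k + 3) : ℝ) else 0)) := by
  have pointwise (θ : ℝ) :
      (k + 3) * ((derivative (shenD j)).eval (cos θ) * (shenB k).eval (cos θ)) =
        2 * ((j * sin (j * θ) - (j + 2) * sin ((j + 2) * θ))
          * ((k + 3) * sin ((k + 1) * θ) - (k + 1) * sin ((k + 3) * θ))) := by
    linear_combination (derivative (shenD j)).eval (cos θ) * shenB_eval_cos k θ
      + 2 * ((k + 3) * sin ((k + 1) * θ) - (k + 1) * sin ((k + 3) * θ))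
        * derivative_shenD_eval_cos_mul_sin j θ
  have orthogonality := integral_sin_sub_sin_mul_sin_sub_sin j (j + 2) (k + 3) (k + 1)
    j (j + 2) (k + 1) (k + 3) (by omega) (by omega)
  push_cast at orthogonality
  rw [chebInner_eq_integral_cos, ← integral_const_mul, integral_congr fun θ _ ↦ pointwise θ,
    integral_const_mul, orthogonality]
  split_ifs <;> ring

/-- The first-derivative matrix `C̃_{kj} = ⟨φ̂_j', φ̃_k⟩_σ`: it is zero except
on the diagonals `j = k−1, k+1, k+3` where `C̃_{k,k−1} = −π(k+1)`,
`C̃_{k,k+1} = 2π(k+1)` and `C̃_{k,k+3} = −π(k+1)`. -/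
theorem shen_first_derivative_matrix_DB :
    -- j = k − 1 (stated with row index k+1): C̃_{k+1,k} = −π((k+1)+1)
    (∀ k : ℕ, chebInner (Polynomial.derivative (shenD k)) (shenB (k + 1)) =
      -Real.pi * (((k : ℝ) + 1) + 1)) ∧
    -- j = k + 1: C̃_{k,k+1} = 2π(k+1)
    (∀ k : ℕ, chebInner (Polynomial.derivative (shenD (k + 1))) (shenB k) =
      2 * Real.pi * ((k : ℝ) + 1)) ∧
    -- j = k + 3: C̃_{k,k+3} = −π(k+1)
    (∀ k : ℕ, chebInner (Polynomial.derivative (shenD (k + 3))) (shenB k) =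
      -Real.pi * ((k : ℝ) + 1)) ∧
    -- otherwise zero
    (∀ j k : ℕ, k ≠ j + 1 → j ≠ k + 1 → j ≠ k + 3 →
      chebInner (Polynomial.derivative (shenD j)) (shenB k) = 0) := by
  have denom_ne_zero (k : ℕ) : (k : ℝ) + 3 ≠ 0 := by positivity
  refine ⟨fun k ↦ ?_, fun k ↦ ?_, fun k ↦ ?_, fun j k h₁ h₂ h₃ ↦ ?_⟩
  · refine mul_left_cancel₀ (denom_ne_zero (k + 1)) ?_
    rw [mul_chebInner_derivative_shenD_shenB, if_neg (by omega), if_neg (by omega), if_pos rfl]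
    push_cast
    ring
  · refine mul_left_cancel₀ (denom_ne_zero k) ?_
    rw [mul_chebInner_derivative_shenD_shenB, if_pos rfl, if_neg (by omega), if_neg (by omega)]
    push_cast
    ring
  · refine mul_left_cancel₀ (denom_ne_zero k) ?_
    rw [mul_chebInner_derivative_shenD_shenB, if_neg (by omega), if_pos rfl, if_neg (by omega)]
    push_cast
    ring
  · refine mul_left_cancel₀ (denom_ne_zero k) ?_
    rw [mul_chebInner_derivative_shenD_shenB, if_neg h₂, if_neg h₃, if_neg (by omega)]
    ring
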